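/- arXiv:0803.1156 — 2 statements merged into one kernel-verified Lean document; each statement's English description precedes it below -/
import Mathlib

section
/- Let π : M → B be the smooth projection of a smooth fiber bundle, where M and B are smooth finite-dimensional real manifolds (Hausdorff and second countable). Let g : B → ℝ^k and H : M → ℝ^K be smooth maps having maximal rank on their zero sets B_g = g^{-1}(0) and M_H = H^{-1}(0), respectively (i.e., dg_y is surjective for every y ∈ B_g and dH_x is surjective for every x ∈ M_H). Then π(M_H) = B_g holds if and only if both of the following conditions hold: (i) there exist smooth functions Λ^{sS} : M → ℝ with g^s(π(x)) = Σ_{S=1}^{K} Λ^{sS}(x) H^S(x) for all x ∈ M; and (ii) for every y₀ ∈ B_g there exists x₀ ∈ M_H with π(x₀) = y₀. -/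
/-!
The substance is the forward direction: if `π(M_H) = B_g`, each `g^s ∘ π` vanishes on the regular
zero set `M_H`, and a smooth function vanishing on a regular zero set is a smooth combination of
the components of `H`. Away from `M_H` one divides by `‖H‖²`. Near a zero of `H`, the inverse
function theorem straightens `H` in a chart to the linear surjection `D = dH`, and then Hadamard's
lemma along the fibres of `D` gives `G v = (∫₀¹ dG(v - σ D v + t σ D v) ∘ σ dt) (D v)` for a right
inverse `σ` of `D`. The identity `f x = Λ x (H x)` is convex in `Λ x`, so a partition of unity
glues the local coefficients. Conversely, (i) gives `π(M_H) ⊆ B_g` and (ii) the reverse inclusion.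
-/

open scoped Manifold ContDiff Topology
open Function MeasureTheory Set Filter

universe u

section ParametricIntegral

variable {E F : Type u} [NormedAddCommGroup E] [NormedSpace ℝ E] [ProperSpace E]
  [NormedAddCommGroup F] [NormedSpace ℝ F]

theorem hasFDerivAt_intervalIntegral_of_contDiff {φ : E → ℝ → F}
    (hφ : ContDiff ℝ 1 (uncurry φ)) (a b : ℝ) (x₀ : E) :
    HasFDerivAt (fun x => ∫ t in a..b, φ x t)
      (∫ t in a..b, fderiv ℝ (uncurry φ) (x₀, t) ∘L .inl ℝ E ℝ) x₀ := by
  set φ' : E → ℝ → E →L[ℝ] F := fun x t => fderiv ℝ (uncurry φ) (x, t) ∘L .inl ℝ E ℝ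
  have hφ'_cont : Continuous (uncurry φ') :=
    (hφ.continuous_fderiv one_ne_zero).clm_comp continuous_const
  obtain ⟨C, hC⟩ : ∃ C, ∀ p ∈ Metric.closedBall x₀ 1 ×ˢ uIcc a b, ‖uncurry φ' p‖ ≤ C :=
    (isCompact_closedBall x₀ 1 |>.prod isCompact_uIcc).exists_bound_of_continuousOn
      hφ'_cont.continuousOn
  have hφ_x : ∀ x t, HasFDerivAt (φ · t) (φ' x t) x := fun x t => by
    have hinl : HasFDerivAt (fun y : E => (y, t)) (.inl ℝ E ℝ) x :=
      (hasFDerivAt_id x).prodMk (hasFDerivAt_const t x)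
    exact ((hφ.differentiable one_ne_zero) (x, t)).hasFDerivAt.comp x hinl
  refine intervalIntegral.hasFDerivAt_integral_of_dominated_of_fderiv_le (𝕜 := ℝ) (μ := volume)
    (F := φ) (F' := φ') (bound := fun _ => C) (Metric.ball_mem_nhds x₀ one_pos)
    (Eventually.of_forall fun x => ?_) ?_ ?_ ?_
    intervalIntegrable_const ?_
  · exact (hφ.continuous.comp (continuous_const.prodMk continuous_id)).aestronglyMeasurable
  · exact (hφ.continuous.comp (continuous_const.prodMk continuous_id)).intervalIntegrable _ _
  · exact (hφ'_cont.comp (continuous_const.prodMk continuous_id)).aestronglyMeasurable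
  · exact Eventually.of_forall fun t ht x hx =>
      hC (x, t) ⟨Metric.ball_subset_closedBall hx, uIoc_subset_uIcc ht⟩
  · exact Eventually.of_forall fun t _ x _ => hφ_x x t

theorem contDiff_intervalIntegral_of_contDiff [CompleteSpace F] {n : ℕ∞} {φ : E → ℝ → F}
    (hφ : ContDiff ℝ n (uncurry φ)) (a b : ℝ) :
    ContDiff ℝ n fun x => ∫ t in a..b, φ x t := by
  induction n using ENat.nat_induction generalizing F with
  | zero =>
    exact contDiff_zero.2 <|
      intervalIntegral.continuous_parametric_intervalIntegral_of_continuous' hφ.continuous a b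
  | succ n ih =>
    have hφ1 : ContDiff ℝ 1 (uncurry φ) := hφ.of_le (by exact_mod_cast le_add_self)
    rw [show ((n.succ : ℕ∞) : WithTop ℕ∞) = (n : WithTop ℕ∞) + 1 by norm_cast,
      contDiff_succ_iff_fderiv]
    refine ⟨fun x => (hasFDerivAt_intervalIntegral_of_contDiff hφ1 a b x).differentiableAt,
      by simp, ?_⟩
    rw [funext fun x => (hasFDerivAt_intervalIntegral_of_contDiff hφ1 a b x).fderiv]
    exact ih (φ := fun x t => fderiv ℝ (uncurry φ) (x, t) ∘L .inl ℝ E ℝ)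
      ((hφ.fderiv_right le_rfl).clm_comp contDiff_const)
  | top ih =>
    exact contDiff_infty.2 fun n => ih n (hφ.of_le (by exact_mod_cast le_top))

end ParametricIntegral

section Hadamard

variable {E F V : Type u} [NormedAddCommGroup E] [NormedSpace ℝ E] [ProperSpace E]
  [NormedAddCommGroup F] [NormedSpace ℝ F] [NormedAddCommGroup V] [NormedSpace ℝ V]
  [CompleteSpace V]

theorem exists_contDiff_eq_clm_apply_of_vanishing_on_ker {G : E → V} (hG : ContDiff ℝ ∞ G)
    (D : E →L[ℝ] F) (σ : F →L[ℝ] E) (hσ : ∀ w, D (σ w) = w) (hvan : ∀ v, D v = 0 → G v = 0) :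
    ∃ Λ : E → F →L[ℝ] V, ContDiff ℝ ∞ Λ ∧ ∀ v, G v = Λ v (D v) := by
  set ℓ : E → ℝ → E := fun v t => v - σ (D v) + t • σ (D v)
  have hℓ : ContDiff ℝ ∞ (uncurry ℓ) := by
    have hP : ContDiff ℝ ∞ fun v => σ (D v) := σ.contDiff.comp D.contDiff
    exact ((contDiff_id.sub hP).comp contDiff_fst).add (contDiff_snd.smul (hP.comp contDiff_fst))
  have hG' : ContDiff ℝ ∞ (fderiv ℝ G) := hG.fderiv_right (by simp)
  refine ⟨fun v => ∫ t in (0 : ℝ)..1, fderiv ℝ G (ℓ v t) ∘L σ,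
    contDiff_intervalIntegral_of_contDiff ((hG'.comp hℓ).clm_comp contDiff_const) 0 1,
    fun v => ?_⟩
  have hcont : Continuous fun t => fderiv ℝ G (ℓ v t) :=
    hG'.continuous.comp (hℓ.continuous.comp (continuous_const.prodMk continuous_id))
  have hderiv : ∀ t, HasDerivAt (fun t => G (ℓ v t)) (fderiv ℝ G (ℓ v t) (σ (D v))) t := by
    intro t
    have hline : HasDerivAt (ℓ v) (σ (D v)) t := by
      have := ((hasDerivAt_id t).smul_const (σ (D v))).const_add (v - σ (D v))
      simpa only [id, one_smul] using this
    exact (hG.differentiable (by simp) _).hasFDerivAt.comp_hasDerivAt t hline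
  have hbase : G (ℓ v 0) = 0 := hvan _ (by simp [ℓ, hσ])
  calc G v = G (ℓ v 1) - G (ℓ v 0) := by rw [hbase, sub_zero]; simp [ℓ]
    _ = ∫ t in (0 : ℝ)..1, fderiv ℝ G (ℓ v t) (σ (D v)) :=
      (intervalIntegral.integral_eq_sub_of_hasDerivAt (fun t _ => hderiv t)
        ((hcont.clm_apply continuous_const).intervalIntegrable 0 1)).symm
    _ = (∫ t in (0 : ℝ)..1, fderiv ℝ G (ℓ v t) ∘L σ) (D v) := by
      rw [ContinuousLinearMap.intervalIntegral_apply
        ((hcont.clm_comp continuous_const).intervalIntegrable 0 1)]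
      rfl

end Hadamard

section LocalInverse

variable {𝕂 : Type*} [RCLike 𝕂] {E F : Type*} [NormedAddCommGroup E] [NormedSpace 𝕂 E]
  [CompleteSpace E] [NormedAddCommGroup F] [NormedSpace 𝕂 F]

theorem ContDiffOn.exists_openPartialHomeomorph_contDiffOn_symm {n : WithTop ℕ∞} (hn : 1 ≤ n)
    {f : E → F} {U : Set E} (hU : IsOpen U) (hf : ContDiffOn 𝕂 n f U) {a : E} (ha : a ∈ U)
    {f' : E ≃L[𝕂] F} (hf' : HasFDerivAt f (f' : E →L[𝕂] F) a) :
    ∃ P : OpenPartialHomeomorph E F, ⇑P = f ∧ a ∈ P.source ∧ P.source ⊆ U ∧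
      ContDiffOn 𝕂 n P.symm P.target := by
  have hn0 : n ≠ 0 := (zero_lt_one.trans_le hn).ne'
  set O := U ∩ fderiv 𝕂 f ⁻¹' range ((↑) : (E ≃L[𝕂] F) → E →L[𝕂] F)
  have hO : IsOpen O :=
    (hf.continuousOn_fderiv_of_isOpen hU hn).isOpen_inter_preimage hU
      ContinuousLinearEquiv.isOpen
  have haO : a ∈ O := ⟨ha, f', hf'.fderiv.symm⟩
  have hfa : ContDiffAt 𝕂 n f a := hf.contDiffAt (hU.mem_nhds ha)
  set P := (hfa.toOpenPartialHomeomorph f hf' hn0).restrOpen O hO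
  refine ⟨P, rfl, ⟨hfa.mem_toOpenPartialHomeomorph_source hf' hn0, haO⟩,
    fun x hx => hx.2.1, fun b hb => ?_⟩
  obtain ⟨-, hbU, e, he⟩ := P.map_target hb
  have hfb : ContDiffAt 𝕂 n f (P.symm b) := hf.contDiffAt (hU.mem_nhds hbU)
  have hderiv : HasFDerivAt P (e : E →L[𝕂] F) (P.symm b) :=
    he ▸ (hfb.differentiableAt hn0).hasFDerivAt
  exact (P.contDiffAt_symm hb hderiv hfb).contDiffWithinAt

end LocalInverse

section LocalHadamard

variable {E F V : Type u} [NormedAddCommGroup E] [NormedSpace ℝ E]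
  [NormedAddCommGroup F] [NormedSpace ℝ F] [NormedAddCommGroup V] [NormedSpace ℝ V]

theorem ContDiffOn.contDiff_smul_of_tsupport_subset {n : WithTop ℕ∞} {χ : E → ℝ} {g : E → V}
    {N : Set E} (hN : IsOpen N) (hχ : ContDiff ℝ n χ) (hg : ContDiffOn ℝ n g N)
    (hsupp : tsupport χ ⊆ N) : ContDiff ℝ n fun u => χ u • g u := by
  refine contDiff_iff_contDiffAt.2 fun u => ?_
  by_cases hu : u ∈ tsupport χ
  · exact hχ.contDiffAt.smul (hg.contDiffAt (hN.mem_nhds (hsupp hu)))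
  · exact contDiffAt_const.congr_of_eventuallyEq <| notMem_tsupport_iff_eventuallyEq.1
      fun h => hu (tsupport_smul_subset_left χ g h)

theorem exists_eventually_eq_clm_apply_of_vanishing_on_ker [FiniteDimensional ℝ E]
    [CompleteSpace V] {g : E → V} {N : Set E} (hN : IsOpen N) (h0 : (0 : E) ∈ N)
    (hg : ContDiffOn ℝ ∞ g N)
    (D : E →L[ℝ] F) (σ : F →L[ℝ] E) (hσ : ∀ w, D (σ w) = w)
    (hvan : ∀ u ∈ N, D u = 0 → g u = 0) :
    ∃ Λ : E → F →L[ℝ] V, ContDiff ℝ ∞ Λ ∧ ∀ᶠ u in 𝓝 0, g u = Λ u (D u) := by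
  obtain ⟨r, hr, hball⟩ := Metric.isOpen_iff.1 hN 0 h0
  let χ : ContDiffBump (0 : E) := ⟨r / 4, r / 2, by positivity, by linarith⟩
  have hχN : tsupport (χ : E → ℝ) ⊆ N := by
    rw [χ.tsupport_eq]
    exact (Metric.closedBall_subset_ball (by linarith [show χ.rOut = r / 2 from rfl])).trans hball
  obtain ⟨Λ, hΛ, hGΛ⟩ := exists_contDiff_eq_clm_apply_of_vanishing_on_ker
    (hg.contDiff_smul_of_tsupport_subset hN χ.contDiff hχN) D σ hσ fun u hu => by
      by_cases huN : u ∈ N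
      · simp [hvan u huN hu]
      · simp [image_eq_zero_of_notMem_tsupport fun h => huN (hχN h)]
  refine ⟨Λ, hΛ, ?_⟩
  filter_upwards [χ.eventuallyEq_one] with u hu
  simpa [hu] using hGΛ u

end LocalHadamard

section Straightening

variable {E F V : Type u} [NormedAddCommGroup E] [NormedSpace ℝ E]
  [NormedAddCommGroup F] [NormedSpace ℝ F] [NormedAddCommGroup V] [NormedSpace ℝ V]

theorem ContDiffOn.exists_straightening [CompleteSpace E] {h : E → F} {U : Set E} (hU : IsOpen U)
    (hh : ContDiffOn ℝ ∞ h U) {e₀ : E} (he₀ : e₀ ∈ U) (σ : F →L[ℝ] E)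
    (hσ : ∀ w, fderiv ℝ h e₀ (σ w) = w) :
    ∃ P : OpenPartialHomeomorph E E, e₀ ∈ P.source ∧ P.source ⊆ U ∧ P e₀ = e₀ ∧
      ContDiffOn ℝ ∞ P P.source ∧ ContDiffOn ℝ ∞ P.symm P.target ∧
      ∀ e ∈ P.source, h e = h e₀ + fderiv ℝ h e₀ (P e - e₀) := by
  set D := fderiv ℝ h e₀
  set Φ : E → E := fun e => e + σ (h e - h e₀ - D (e - e₀))
  have hΦD : ∀ e, h e = h e₀ + D (Φ e - e₀) := fun e => by
    simp only [Φ, add_sub_right_comm e, map_add, hσ, map_sub]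
    abel
  have hΦ : ContDiffOn ℝ ∞ Φ U := contDiffOn_id.add <| σ.contDiff.comp_contDiffOn <|
    (hh.sub contDiffOn_const).sub (D.contDiff.comp (contDiff_id.sub contDiff_const)).contDiffOn
  have hΦ' : HasFDerivAt Φ ((ContinuousLinearEquiv.refl ℝ E : E ≃L[ℝ] E) : E →L[ℝ] E) e₀ := by
    have hD : HasFDerivAt h D e₀ :=
      ((hh.contDiffAt (hU.mem_nhds he₀)).differentiableAt (by simp)).hasFDerivAt
    have := (hasFDerivAt_id e₀).add <| σ.hasFDerivAt.comp e₀ <|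
      (hD.sub_const (h e₀)).sub (D.hasFDerivAt.comp e₀ ((hasFDerivAt_id e₀).sub_const e₀))
    convert this using 1
    · ext v
      simp [Φ, map_sub]
    · ext v
      simp
  obtain ⟨P, hPΦ, he₀P, hPU, hPsymm⟩ :=
    hΦ.exists_openPartialHomeomorph_contDiffOn_symm (by simp) hU he₀ hΦ'
  refine ⟨P, he₀P, hPU, by simp [hPΦ, Φ], hPΦ ▸ hΦ.mono hPU, hPsymm, fun e _ => ?_⟩
  rw [hPΦ, ← hΦD]

end Straightening

section LocalNormalForm

variable {E F V : Type u} [NormedAddCommGroup E] [NormedSpace ℝ E] [FiniteDimensional ℝ E]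
  [NormedAddCommGroup F] [NormedSpace ℝ F] [FiniteDimensional ℝ F]
  [NormedAddCommGroup V] [NormedSpace ℝ V] [CompleteSpace V]

theorem ContDiffOn.exists_local_eq_clm_apply_of_vanishing {h : E → F} {f : E → V} {U : Set E}
    (hU : IsOpen U) (hh : ContDiffOn ℝ ∞ h U) (hf : ContDiffOn ℝ ∞ f U) {e₀ : E} (he₀ : e₀ ∈ U)
    (hz : h e₀ = 0) (hsurj : Surjective (fderiv ℝ h e₀)) (hvan : ∀ e ∈ U, h e = 0 → f e = 0) :
    ∃ W ∈ 𝓝 e₀, ∃ Λ : E → F →L[ℝ] V, ContDiffOn ℝ ∞ Λ W ∧ ∀ e ∈ W, f e = Λ e (h e) := by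
  set D := fderiv ℝ h e₀
  obtain ⟨σ, hσ⟩ := (D : E →ₗ[ℝ] F).exists_rightInverse_of_surjective
    (LinearMap.range_eq_top.2 hsurj)
  have hσ' : ∀ w, D (LinearMap.toContinuousLinearMap σ w) = w := fun w =>
    LinearMap.congr_fun hσ w
  obtain ⟨P, he₀P, hPU, hPe₀, hP, hPsymm, hhP⟩ := hh.exists_straightening hU he₀ _ hσ'
  simp only [hz, zero_add] at hhP
  set N : Set E := (e₀ + ·) ⁻¹' P.target
  have hN : IsOpen N := (continuous_const.add continuous_id).isOpen_preimage _ P.open_target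
  have h0N : (0 : E) ∈ N := by simpa [N, hPe₀] using P.map_source he₀P
  have hsymmN : MapsTo (fun u => P.symm (e₀ + u)) N P.source := fun u hu => P.map_target hu
  have hg : ContDiffOn ℝ ∞ (fun u => f (P.symm (e₀ + u))) N :=
    hf.comp (hPsymm.comp (contDiff_const.add contDiff_id).contDiffOn fun u hu => hu)
      (hsymmN.mono_right hPU)
  obtain ⟨Λ, hΛ, hfΛ⟩ := exists_eventually_eq_clm_apply_of_vanishing_on_ker hN h0N hg D _ hσ'
    fun u hu hDu => hvan _ (hPU (hsymmN hu)) <| by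
      rw [hhP _ (hsymmN hu), P.right_inv hu, add_sub_cancel_left, hDu]
  have hPt : Tendsto (fun e => P e - e₀) (𝓝 e₀) (𝓝 0) := by
    simpa [hPe₀] using (P.continuousAt he₀P).tendsto.sub_const e₀
  refine ⟨P.source ∩ (fun e => P e - e₀) ⁻¹' {u | f (P.symm (e₀ + u)) = Λ u (D u)},
    inter_mem (P.open_source.mem_nhds he₀P) (hPt hfΛ), fun e => Λ (P e - e₀),
    hΛ.comp_contDiffOn ((hP.sub contDiffOn_const).mono inter_subset_left), ?_⟩
  rintro e ⟨heP, he⟩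
  simp only [mem_preimage, mem_ofPred_eq, add_sub_cancel, P.left_inv heP] at he
  rw [he, hhP e heP]

end LocalNormalForm

section ChartCase

variable {E H M F V : Type u} [NormedAddCommGroup E] [NormedSpace ℝ E]
  [TopologicalSpace H] {I : ModelWithCorners ℝ E H} [I.Boundaryless]
  [TopologicalSpace M] [ChartedSpace H M]
  [NormedAddCommGroup F] [NormedSpace ℝ F] [NormedAddCommGroup V] [NormedSpace ℝ V]
  {h : M → F} {f : M → V}

theorem mfderiv_eq_fderiv_comp_extChartAt_symm {x₀ : M} (hh : MDifferentiableAt I 𝓘(ℝ, F) h x₀) :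
    mfderiv I 𝓘(ℝ, F) h x₀ = fderiv ℝ (h ∘ (extChartAt I x₀).symm) (extChartAt I x₀ x₀) := by
  rw [hh.mfderiv, I.range_eq_univ, fderivWithin_univ]
  rfl

variable [FiniteDimensional ℝ E] [IsManifold I ∞ M] [FiniteDimensional ℝ F] [CompleteSpace V]

theorem ContMDiff.exists_local_eq_clm_apply_of_eq_zero (hh : ContMDiff I 𝓘(ℝ, F) ∞ h)
    (hf : ContMDiff I 𝓘(ℝ, V) ∞ f) (hvan : ∀ x, h x = 0 → f x = 0) {x₀ : M} (hx₀ : h x₀ = 0)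
    (hsurj : Surjective (mfderiv I 𝓘(ℝ, F) h x₀)) :
    ∃ W ∈ 𝓝 x₀, ∃ Λ : M → F →L[ℝ] V,
      ContMDiffOn I 𝓘(ℝ, F →L[ℝ] V) ∞ Λ W ∧ ∀ x ∈ W, f x = Λ x (h x) := by
  set φ := extChartAt I x₀
  have hsymm : ContMDiffOn 𝓘(ℝ, E) I ∞ φ.symm φ.target := contMDiffOn_extChartAt_symm x₀
  obtain ⟨W, hW, Λ, hΛ, hfΛ⟩ := ContDiffOn.exists_local_eq_clm_apply_of_vanishing
    (isOpen_extChartAt_target x₀) (hh.comp_contMDiffOn hsymm).contDiffOn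
    (hf.comp_contMDiffOn hsymm).contDiffOn (mem_extChartAt_target x₀)
    (by simpa [φ] using hx₀)
    (by rwa [← mfderiv_eq_fderiv_comp_extChartAt_symm (hh.mdifferentiableAt (by simp))])
    fun e _ he => hvan _ he
  refine ⟨φ.source ∩ φ ⁻¹' W, inter_mem (extChartAt_source_mem_nhds x₀)
    ((continuousAt_extChartAt x₀).preimage_mem_nhds hW), fun x => Λ (φ x), ?_, ?_⟩
  · exact hΛ.contMDiffOn.comp (contMDiffOn_extChartAt.mono fun x hx => by simpa [φ] using hx.1)
      fun x hx => hx.2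
  · rintro x ⟨hxφ, hxW⟩
    simpa [φ.left_inv hxφ] using hfΛ _ hxW

end ChartCase

section IdealOfRegularZeroSet

variable {E H M F V : Type u} [NormedAddCommGroup E] [NormedSpace ℝ E]
  [TopologicalSpace H] {I : ModelWithCorners ℝ E H} [TopologicalSpace M] [ChartedSpace H M]
  [NormedAddCommGroup F] [InnerProductSpace ℝ F] [NormedAddCommGroup V] [NormedSpace ℝ V]
  {h : M → F} {f : M → V}

theorem ContMDiff.exists_local_eq_clm_apply_of_ne_zero (hh : ContMDiff I 𝓘(ℝ, F) ∞ h)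
    (hf : ContMDiff I 𝓘(ℝ, V) ∞ f) {x₀ : M} (hx₀ : h x₀ ≠ 0) :
    ∃ W ∈ 𝓝 x₀, ∃ Λ : M → F →L[ℝ] V,
      ContMDiffOn I 𝓘(ℝ, F →L[ℝ] V) ∞ Λ W ∧ ∀ x ∈ W, f x = Λ x (h x) := by
  set k : F × V → F →L[ℝ] V := fun p => (‖p.1‖ ^ 2)⁻¹ • (innerSL ℝ p.1).smulRight p.2
  have hk : ContDiffOn ℝ ∞ k {p | p.1 ≠ 0} :=
    (((contDiff_norm_sq ℝ).comp contDiff_fst).contDiffOn.inv fun p hp => by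
      simpa using hp).smul
      (((innerSL ℝ).contDiff.comp contDiff_fst).smulRight contDiff_snd).contDiffOn
  refine ⟨{x | h x ≠ 0}, hh.continuous.isOpen_preimage _ isOpen_ne |>.mem_nhds hx₀,
    fun x => k (h x, f x), hk.contMDiffOn.comp (hh.prodMk_space hf).contMDiffOn fun x hx => hx,
    fun x hx => ?_⟩
  have : ‖h x‖ ^ 2 ≠ 0 := by simpa using hx
  simp [k, smul_smul, inv_mul_cancel₀ this]

variable [FiniteDimensional ℝ E] [I.Boundaryless] [IsManifold I ∞ M] [FiniteDimensional ℝ F]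
  [CompleteSpace V]

theorem ContMDiff.exists_local_eq_clm_apply (hh : ContMDiff I 𝓘(ℝ, F) ∞ h)
    (hrank : ∀ x, h x = 0 → Surjective (mfderiv I 𝓘(ℝ, F) h x))
    (hf : ContMDiff I 𝓘(ℝ, V) ∞ f) (hvan : ∀ x, h x = 0 → f x = 0) (x₀ : M) :
    ∃ W ∈ 𝓝 x₀, ∃ Λ : M → F →L[ℝ] V,
      ContMDiffOn I 𝓘(ℝ, F →L[ℝ] V) ∞ Λ W ∧ ∀ x ∈ W, f x = Λ x (h x) := by
  by_cases hx₀ : h x₀ = 0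
  · exact hh.exists_local_eq_clm_apply_of_eq_zero hf hvan hx₀ (hrank x₀ hx₀)
  · exact hh.exists_local_eq_clm_apply_of_ne_zero hf hx₀

theorem ContMDiff.exists_contMDiff_eq_clm_apply [T2Space M] [SecondCountableTopology M]
    (hh : ContMDiff I 𝓘(ℝ, F) ∞ h)
    (hrank : ∀ x, h x = 0 → Surjective (mfderiv I 𝓘(ℝ, F) h x))
    (hf : ContMDiff I 𝓘(ℝ, V) ∞ f) (hvan : ∀ x, h x = 0 → f x = 0) :
    ∃ Λ : M → F →L[ℝ] V, ContMDiff I 𝓘(ℝ, F →L[ℝ] V) ∞ Λ ∧ ∀ x, f x = Λ x (h x) := by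
  have : LocallyCompactSpace H := I.locallyCompactSpace
  have : LocallyCompactSpace M := ChartedSpace.locallyCompactSpace H M
  have : SigmaCompactSpace M := sigmaCompactSpace_of_locallyCompact_secondCountable
  have hconv : ∀ x, Convex ℝ {L : F →L[ℝ] V | f x = L (h x)} :=
    fun x L₁ h₁ L₂ h₂ a b _ _ hab => by
      rw [mem_ofPred_eq, add_apply, smul_apply, smul_apply, ← h₁, ← h₂, ← add_smul, hab, one_smul]
  obtain ⟨Λ, hΛ⟩ := exists_contMDiffMap_forall_mem_convex_of_local I hconv
    (hh.exists_local_eq_clm_apply hrank hf hvan)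
  exact ⟨Λ, Λ.contMDiff, hΛ⟩

end IdealOfRegularZeroSet

theorem EuclideanSpace.clm_apply_eq_sum {ι W : Type*} [Fintype ι] [DecidableEq ι]
    [AddCommGroup W] [Module ℝ W] [TopologicalSpace W] (L : EuclideanSpace ℝ ι →L[ℝ] W)
    (w : EuclideanSpace ℝ ι) :
    L w = ∑ i, w i • L (EuclideanSpace.single i 1) := by
  conv_lhs => rw [← (EuclideanSpace.basisFun ι ℝ).sum_repr w]
  simp [map_sum]

theorem foliated_iff_consequence_and_lifting_general
    {EM : Type} [NormedAddCommGroup EM] [NormedSpace ℝ EM] [FiniteDimensional ℝ EM]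
    {HM : Type} [TopologicalSpace HM] (IM : ModelWithCorners ℝ EM HM) [IM.Boundaryless]
    {M : Type} [TopologicalSpace M] [ChartedSpace HM M] [IsManifold IM (⊤ : ℕ∞) M]
    [T2Space M] [SecondCountableTopology M]
    {EB : Type} [NormedAddCommGroup EB] [NormedSpace ℝ EB]
    {HB : Type} [TopologicalSpace HB] (IB : ModelWithCorners ℝ EB HB)
    {B : Type} [TopologicalSpace B] [ChartedSpace HB B]
    (π : M → B) (hπ : ContMDiff IM IB (⊤ : ℕ∞) π)
    (k K : ℕ)
    (H : M → EuclideanSpace ℝ (Fin K)) (hH : ContMDiff IM (𝓡 K) (⊤ : ℕ∞) H)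
    (g : B → EuclideanSpace ℝ (Fin k)) (hg : ContMDiff IB (𝓡 k) (⊤ : ℕ∞) g)
    (hHrank : ∀ x : M, H x = 0 → Surjective (mfderiv IM (𝓡 K) H x)) :
    π '' {x : M | H x = 0} = {y : B | g y = 0} ↔
    ((∃ Λ : Fin k → Fin K → M → ℝ,
        (∀ s S, ContMDiff IM 𝓘(ℝ, ℝ) (⊤ : ℕ∞) (Λ s S)) ∧
        ∀ (x : M) (s : Fin k), g (π x) s = ∑ S : Fin K, Λ s S x * H x S) ∧
      (∀ y : B, g y = 0 → ∃ x : M, H x = 0 ∧ π x = y)) := by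
  constructor
  · intro hfol
    obtain ⟨Λ, hΛ, hgΛ⟩ := hH.exists_contMDiff_eq_clm_apply hHrank (hg.comp hπ)
      fun x hx => hfol.subset ⟨x, hx, rfl⟩
    refine ⟨⟨fun s S x => Λ x (EuclideanSpace.single S 1) s, fun s S => ?_, fun x s => ?_⟩,
      fun y hy => hfol.symm.subset hy⟩
    · exact ((EuclideanSpace.proj s).comp
        (ContinuousLinearMap.apply ℝ _ (EuclideanSpace.single S 1))).contMDiff.comp hΛ
    · rw [show g (π x) = Λ x (H x) from hgΛ x, EuclideanSpace.clm_apply_eq_sum (Λ x) (H x)]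
      simp [mul_comm]
  · rintro ⟨⟨Λ, -, hgΛ⟩, hlift⟩
    refine subset_antisymm ?_ fun y hy => hlift y hy
    rintro _ ⟨x, hx : H x = 0, rfl⟩
    ext s
    simp [hgΛ x s, hx]

/-- Proposition 4.4 of the paper.  For a smooth fiber bundle projection `π : M → B` and
smooth maps `H : M → ℝ^K`, `g : B → ℝ^k` of maximal rank on their zero sets
`M_H = {H = 0}` and `B_g = {g = 0}`:  the system `H = 0` is foliated over the base system
`g = 0` (i.e. `π(M_H) = B_g`) iff (i) the pullback of `g = 0` under `π` is a consequence
of `H = 0` (`g^s ∘ π = Σ_S Λ^{sS} H^S` with smooth `Λ^{sS}`) and (ii) every solution of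
`g = 0` lifts to a solution of `H = 0`. -/
theorem foliated_iff_consequence_and_lifting
    {EM : Type} [NormedAddCommGroup EM] [NormedSpace ℝ EM] [FiniteDimensional ℝ EM]
    {HM : Type} [TopologicalSpace HM] (IM : ModelWithCorners ℝ EM HM) [IM.Boundaryless]
    {M : Type} [TopologicalSpace M] [ChartedSpace HM M] [IsManifold IM (⊤ : ℕ∞) M]
    [T2Space M] [SecondCountableTopology M]
    {EB : Type} [NormedAddCommGroup EB] [NormedSpace ℝ EB] [FiniteDimensional ℝ EB]
    {HB : Type} [TopologicalSpace HB] (IB : ModelWithCorners ℝ EB HB) [IB.Boundaryless]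
    {B : Type} [TopologicalSpace B] [ChartedSpace HB B] [IsManifold IB (⊤ : ℕ∞) B]
    [T2Space B] [SecondCountableTopology B]
    (F : Type) [TopologicalSpace F]
    (π : M → B) (hπ : ContMDiff IM IB (⊤ : ℕ∞) π)
    (hbundle : ∀ y : B, ∃ e : Bundle.Trivialization F π, y ∈ e.baseSet)
    (k K : ℕ)
    (H : M → EuclideanSpace ℝ (Fin K)) (hH : ContMDiff IM (𝓡 K) (⊤ : ℕ∞) H)
    (g : B → EuclideanSpace ℝ (Fin k)) (hg : ContMDiff IB (𝓡 k) (⊤ : ℕ∞) g)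
    (hHrank : ∀ x : M, H x = 0 → Surjective (mfderiv IM (𝓡 K) H x))
    (hgrank : ∀ y : B, g y = 0 → Surjective (mfderiv IB (𝓡 k) g y)) :
    π '' {x : M | H x = 0} = {y : B | g y = 0} ↔
    ((∃ Λ : Fin k → Fin K → M → ℝ,
        (∀ s S, ContMDiff IM 𝓘(ℝ, ℝ) (⊤ : ℕ∞) (Λ s S)) ∧
        ∀ (x : M) (s : Fin k), g (π x) s = ∑ S : Fin K, Λ s S x * H x S) ∧
      (∀ y : B, g y = 0 → ∃ x : M, H x = 0 ∧ π x = y)) :=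
  foliated_iff_consequence_and_lifting_general IM IB π hπ k K H hH g hg hHrank
end

section
/- Let u, v : ℝ² → ℝ be smooth functions of (t,x) with u nowhere vanishing, satisfying the potential system v_x = u and v_t = u^{-2}·u_x − u^{-1} at every point. Let σ : ℝ² → ℝ, written σ = σ(t,w), be a smooth solution of the backward linear heat equation σ_t + σ_ww = 0. Then the identity ∂_t[σ(t, v(t,x))·e^x] + ∂_x[σ_w(t, v(t,x))·u(t,x)^{-1}·e^x] = 0 holds at every point of ℝ², i.e., (σ(t,v)·e^x, σ_w(t,v)·u^{-1}·e^x) is a conserved vector of this potential system. -/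
/-- Partial derivative with respect to the first variable. -/
noncomputable def pt (f : ℝ × ℝ → ℝ) (p : ℝ × ℝ) : ℝ := fderiv ℝ f p (1, 0)

/-- Partial derivative with respect to the second variable. -/
noncomputable def px (f : ℝ × ℝ → ℝ) (p : ℝ × ℝ) : ℝ := fderiv ℝ f p (0, 1)

private lemma fderiv_apply_pair (f : ℝ × ℝ → ℝ) (p : ℝ × ℝ) (a b : ℝ) :
    fderiv ℝ f p (a, b) = a * pt f p + b * px f p := by
  have h : ((a, b) : ℝ × ℝ) = a • ((1 : ℝ), (0 : ℝ)) + b • ((0 : ℝ), (1 : ℝ)) := by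
    simp [Prod.ext_iff]
  rw [h, map_add, map_smul, map_smul, pt, px, smul_eq_mul, smul_eq_mul]

private lemma comp_fderiv (f v : ℝ × ℝ → ℝ) (hf : ContDiff ℝ (⊤ : ℕ∞) f) (hv : ContDiff ℝ (⊤ : ℕ∞) v)
    (p : ℝ × ℝ) (w : ℝ × ℝ) :
    fderiv ℝ (fun q => f (q.1, v q)) p w = fderiv ℝ f (p.1, v p) (w.1, fderiv ℝ v p w) := by
  have hg : HasFDerivAt (fun q : ℝ × ℝ => (q.1, v q))
      ((ContinuousLinearMap.fst ℝ ℝ ℝ).prod (fderiv ℝ v p)) p :=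
    HasFDerivAt.prodMk (hasFDerivAt_fst) (hv.differentiable (by simp) p).hasFDerivAt
  have hf' := (hf.differentiable (by simp) (p.1, v p)).hasFDerivAt
  have h := (hf'.comp p hg).fderiv
  have heq : (fun q => f (q.1, v q)) = f ∘ fun q : ℝ × ℝ => (q.1, v q) := rfl
  rw [heq, h]; rfl

private lemma pt_comp (f v : ℝ × ℝ → ℝ) (hf : ContDiff ℝ (⊤ : ℕ∞) f) (hv : ContDiff ℝ (⊤ : ℕ∞) v)
    (p : ℝ × ℝ) :
    pt (fun q => f (q.1, v q)) p = pt f (p.1, v p) + pt v p * px f (p.1, v p) := by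
  rw [pt, comp_fderiv f v hf hv p (1, 0), fderiv_apply_pair]
  simp [pt]

private lemma px_comp (f v : ℝ × ℝ → ℝ) (hf : ContDiff ℝ (⊤ : ℕ∞) f) (hv : ContDiff ℝ (⊤ : ℕ∞) v)
    (p : ℝ × ℝ) :
    px (fun q => f (q.1, v q)) p = px v p * px f (p.1, v p) := by
  rw [px, comp_fderiv f v hf hv p (0, 1), fderiv_apply_pair]
  simp [px]

private lemma pt_mul (f g : ℝ × ℝ → ℝ) (p : ℝ × ℝ)
    (hf : DifferentiableAt ℝ f p) (hg : DifferentiableAt ℝ g p) :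
    pt (fun q => f q * g q) p = pt f p * g p + f p * pt g p := by
  unfold pt
  rw [fderiv_fun_mul hf hg]
  simp [smul_eq_mul]
  ring

private lemma px_mul (f g : ℝ × ℝ → ℝ) (p : ℝ × ℝ)
    (hf : DifferentiableAt ℝ f p) (hg : DifferentiableAt ℝ g p) :
    px (fun q => f q * g q) p = px f p * g p + f p * px g p := by
  unfold px
  rw [fderiv_fun_mul hf hg]
  simp [smul_eq_mul]
  ring

private lemma exp_snd_hasFDerivAt (p : ℝ × ℝ) :
    HasFDerivAt (fun q : ℝ × ℝ => Real.exp q.2)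
      (Real.exp p.2 • ContinuousLinearMap.snd ℝ ℝ ℝ) p :=
  (Real.hasDerivAt_exp p.2).comp_hasFDerivAt p hasFDerivAt_snd

private lemma pt_exp (p : ℝ × ℝ) : pt (fun q : ℝ × ℝ => Real.exp q.2) p = 0 := by
  rw [pt, (exp_snd_hasFDerivAt p).fderiv]; simp

private lemma px_exp (p : ℝ × ℝ) :
    px (fun q : ℝ × ℝ => Real.exp q.2) p = Real.exp p.2 := by
  rw [px, (exp_snd_hasFDerivAt p).fderiv]; simp

private lemma px_inv (u : ℝ × ℝ → ℝ) (hu : ContDiff ℝ (⊤ : ℕ∞) u) (hune : ∀ p, u p ≠ 0)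
    (p : ℝ × ℝ) :
    px (fun q => (u q)⁻¹) p = -((u p) ^ 2)⁻¹ * px u p := by
  have h := ((hasDerivAt_inv (hune p)).comp_hasFDerivAt p
    (hu.differentiable (by simp) p).hasFDerivAt).fderiv
  have heq : (fun q => (u q)⁻¹) = (fun y : ℝ => y⁻¹) ∘ u := rfl
  rw [px, heq, h]
  simp [px, smul_eq_mul]

/-- The conservation laws `F⁶_σ` of the potential system `v_x = u`, `v_t = u⁻²u_x − u⁻¹`
of the linearizable equation `u_t = (u⁻²u_x)_x + u⁻²u_x`: for any solution `σ = σ(t,w)` of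
the backward linear heat equation, `(σ(t,v)·eˣ, σ_w(t,v)·u⁻¹·eˣ)` is a conserved vector. -/
theorem conserved_vector_F6
    (u v : ℝ × ℝ → ℝ) (σ : ℝ × ℝ → ℝ)
    (hu : ContDiff ℝ (⊤ : ℕ∞) u) (hv : ContDiff ℝ (⊤ : ℕ∞) v) (hσ : ContDiff ℝ (⊤ : ℕ∞) σ)
    (hune : ∀ p, u p ≠ 0)
    (h1 : ∀ p, px v p = u p)
    (h2 : ∀ p, pt v p = (u p)⁻¹ ^ 2 * px u p - (u p)⁻¹)
    (hbackheat : ∀ p, pt σ p + px (px σ) p = 0) :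
    ∀ p : ℝ × ℝ,
      pt (fun q => σ (q.1, v q) * Real.exp q.2) p
        + px (fun q => px σ (q.1, v q) * (u q)⁻¹ * Real.exp q.2) p = 0 := by
  intro p
  -- smoothness of σ_w := px σ
  have hσw : ContDiff ℝ (⊤ : ℕ∞) (px σ) := by
    have h1' : ContDiff ℝ (⊤ : ℕ∞) (fderiv ℝ σ) := hσ.fderiv_right (by simp)
    exact h1'.clm_apply contDiff_const
  have hpair : ContDiff ℝ (⊤ : ℕ∞) (fun q : ℝ × ℝ => (q.1, v q)) := contDiff_fst.prodMk hv
  have hS : ContDiff ℝ (⊤ : ℕ∞) (fun q : ℝ × ℝ => σ (q.1, v q)) := hσ.comp hpair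
  have hA : ContDiff ℝ (⊤ : ℕ∞) (fun q : ℝ × ℝ => px σ (q.1, v q)) := hσw.comp hpair
  have hB : ContDiff ℝ (⊤ : ℕ∞) (fun q : ℝ × ℝ => (u q)⁻¹) := hu.inv hune
  have hC : ContDiff ℝ (⊤ : ℕ∞) (fun q : ℝ × ℝ => Real.exp q.2) :=
    Real.contDiff_exp.comp contDiff_snd
  have dS := (hS.differentiable (by simp)) p
  have dA := (hA.differentiable (by simp)) p
  have dB := (hB.differentiable (by simp)) p
  have dC := (hC.differentiable (by simp)) p
  -- pt of the first component
  have e1 : pt (fun q => σ (q.1, v q) * Real.exp q.2) p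
      = (pt σ (p.1, v p) + pt v p * px σ (p.1, v p)) * Real.exp p.2 := by
    rw [pt_mul _ _ p dS dC, pt_exp, pt_comp σ v hσ hv]
    ring
  -- px of the second component
  have e2 : px (fun q => px σ (q.1, v q) * (u q)⁻¹ * Real.exp q.2) p
      = (px v p * px (px σ) (p.1, v p) * (u p)⁻¹
          + px σ (p.1, v p) * (-((u p) ^ 2)⁻¹ * px u p)) * Real.exp p.2
        + px σ (p.1, v p) * (u p)⁻¹ * Real.exp p.2 := by
    rw [px_mul _ _ p (dA.fun_mul dB) dC, px_exp,
        px_mul _ _ p dA dB, px_comp (px σ) v hσw hv, px_inv u hu hune]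
  rw [e1, e2, h1, h2]
  have hbh := hbackheat (p.1, v p)
  have hu' := hune p
  linear_combination Real.exp p.2 * hbh
    + px (px σ) (p.1, v p) * Real.exp p.2 * mul_inv_cancel₀ hu'
end
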